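/- Integral form of the quasi-static energy cost: let t ↦ ρ(t) be a continuously differentiable map from ℝ into the density matrices on ℂ^d with ρ(t) faithful for every t ∈ (0,1]. Then the (possibly improper) integral ∫₀¹ tr(ρ'(t)·log ρ(t)) dt converges and equals S(ρ(0)) − S(ρ(1)). -/

import Mathlib

open Matrix Kronecker ComplexOrder

/-- Logarithm of a matrix, defined via the spectral theorem for Hermitian matrices
(junk value `0` on non-Hermitian matrices).  Since `Real.log 0 = 0`, for a positive
semidefinite matrix this is the logarithm taken on the support, with the convention
`log 0 = 0` on the kernel. -/
noncomputable def mlog {n : Type*} [Fintype n] [DecidableEq n] (A : Matrix n n ℂ) :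
    Matrix n n ℂ :=
  if hA : A.IsHermitian then
    (hA.eigenvectorUnitary : Matrix n n ℂ) *
      Matrix.diagonal (fun i => (Real.log (hA.eigenvalues i) : ℂ)) *
      (star hA.eigenvectorUnitary : Matrix n n ℂ)
  else 0

/-- von Neumann entropy `S(ρ) = -tr(ρ log ρ)`. -/
noncomputable def vnEnt {n : Type*} [Fintype n] [DecidableEq n] (ρ : Matrix n n ℂ) : ℝ :=
  -(Matrix.trace (ρ * mlog ρ)).re

/-- Relative entropy `S(ζ₁|ζ₂) = tr(ζ₁ (log ζ₁ - log ζ₂))`. -/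
noncomputable def relEnt {n : Type*} [Fintype n] [DecidableEq n] (ζ₁ ζ₂ : Matrix n n ℂ) : ℝ :=
  (Matrix.trace (ζ₁ * (mlog ζ₁ - mlog ζ₂))).re

/-- A density matrix: positive semidefinite with unit trace. -/
def IsDensityMatrix {n : Type*} [Fintype n] [DecidableEq n] (ρ : Matrix n n ℂ) : Prop :=
  ρ.PosSemidef ∧ ρ.trace = 1

/-- Partial trace over the reservoir (second) factor:
`(tr_R M)_{ij} = Σ_k M_{(i,k),(j,k)}`. -/
noncomputable def ptraceR {dS dR : ℕ} (M : Matrix (Fin dS × Fin dR) (Fin dS × Fin dR) ℂ) :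
    Matrix (Fin dS) (Fin dS) ℂ :=
  Matrix.of fun i j => ∑ k, M (i, k) (j, k)

/-- Partial trace over the system (first) factor:
`(tr_S M)_{kl} = Σ_i M_{(i,k),(i,l)}`. -/
noncomputable def ptraceS {dS dR : ℕ} (M : Matrix (Fin dS × Fin dR) (Fin dS × Fin dR) ℂ) :
    Matrix (Fin dR) (Fin dR) ℂ :=
  Matrix.of fun k l => ∑ i, M (i, k) (i, l)

/-- The Gibbs state `e^{-βH}/tr(e^{-βH})` at inverse temperature `β`. -/
noncomputable def gibbs {dR : ℕ} (β : ℝ) (H : Matrix (Fin dR) (Fin dR) ℂ) :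
    Matrix (Fin dR) (Fin dR) ℂ :=
  (Matrix.trace (NormedSpace.exp ((-β : ℂ) • H)))⁻¹ • NormedSpace.exp ((-β : ℂ) • H)

/-- The trace norm `‖X‖₁ = tr((X*X)^{1/2})`. -/
noncomputable def traceNorm {n : Type*} [Fintype n] [DecidableEq n] (X : Matrix n n ℂ) : ℝ :=
  (Matrix.trace ((Matrix.posSemidef_conjTranspose_mul_self X).1.eigenvectorUnitary.1 *
    Matrix.diagonal (((↑) : ℝ → ℂ) ∘ Real.sqrt ∘ (Matrix.posSemidef_conjTranspose_mul_self X).1.eigenvalues) *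
    (star (Matrix.posSemidef_conjTranspose_mul_self X).1.eigenvectorUnitary : Matrix n n ℂ))).re


/-!
For positive definite `A` one has `log A = ∫₀¹ (A - 1)(1 + u(A - 1))⁻¹ du`, which on the spectrum
is the scalar identity `∫₀¹ (x - 1)/(1 + u(x - 1)) du = log x`. Hence `tr(A log A) = ∫₀¹ Φ(A, u) du`
with `Φ(A, u) = tr(A (A - 1)(1 + u(A - 1))⁻¹)`, which is built from `A` by ring operations and one
inversion and can therefore be differentiated along the path `ρ`. With `R = (1 + u(ρ - 1))⁻¹`,
`∂ₜ Φ(ρ t, u) = tr(ρ' (ρ - 1) R) + tr(ρ R ρ' R)`; integrating over `u`, the first term gives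
`tr(ρ' log ρ)` and the second gives `tr ρ'`, since `∫₀¹ x (1 + u(x - 1))⁻² du = 1`. Exchanging the
`t`- and `u`-integrals yields `∫_ε^1 tr(ρ' log ρ) dt = S(ρ ε) - S(ρ 1)` for `0 < ε`, as `tr ρ' = 0`.
Finally `S` is continuous on Hermitian matrices (continuity of the functional calculus for
`x ↦ x log x`), so one may let `ε → 0`.
-/

section ScalarIntegrals
open Set intervalIntegral

variable {x : ℝ}

lemma one_add_mul_sub_one_pos {u : ℝ} (hx : 0 < x) (hu : u ∈ Icc (0 : ℝ) 1) :
    0 < 1 + u * (x - 1) := by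
  obtain ⟨hu₀, hu₁⟩ := hu
  rcases hu₁.lt_or_eq with hu₁ | rfl
  · nlinarith [mul_nonneg hu₀ hx.le]
  · linarith

lemma continuousOn_inv_one_add_mul_sub_one (hx : 0 < x) :
    ContinuousOn (fun u : ℝ => (1 + u * (x - 1))⁻¹) (Icc 0 1) :=
  ContinuousOn.inv₀ (by fun_prop) fun _ hu => (one_add_mul_sub_one_pos hx hu).ne'

lemma hasDerivAt_one_add_mul_sub_one (x u : ℝ) :
    HasDerivAt (fun u => 1 + u * (x - 1)) (x - 1) u := by
  simpa using ((hasDerivAt_id u).mul_const (x - 1)).const_add 1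

lemma integral_sub_one_mul_inv_one_add_mul_sub_one (hx : 0 < x) :
    ∫ u in (0 : ℝ)..1, (x - 1) * (1 + u * (x - 1))⁻¹ = Real.log x := by
  have hderiv : ∀ u ∈ uIcc (0 : ℝ) 1,
      HasDerivAt (fun u => Real.log (1 + u * (x - 1))) ((x - 1) * (1 + u * (x - 1))⁻¹) u := by
    intro u hu
    rw [uIcc_of_le zero_le_one] at hu
    exact ((hasDerivAt_one_add_mul_sub_one x u).log
      (one_add_mul_sub_one_pos hx hu).ne').congr_deriv (div_eq_mul_inv _ _)
  rw [integral_eq_sub_of_hasDerivAt hderiv ((continuousOn_const.mul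
    (continuousOn_inv_one_add_mul_sub_one hx)).intervalIntegrable_of_Icc zero_le_one)]
  simp

lemma integral_inv_one_add_mul_sub_one_sq (hx : 0 < x) :
    ∫ u in (0 : ℝ)..1, ((1 + u * (x - 1))⁻¹) ^ 2 = x⁻¹ := by
  have hderiv : ∀ u ∈ uIcc (0 : ℝ) 1,
      HasDerivAt (fun u => u * (1 + u * (x - 1))⁻¹) (((1 + u * (x - 1))⁻¹) ^ 2) u := by
    intro u hu
    rw [uIcc_of_le zero_le_one] at hu
    have hpos := one_add_mul_sub_one_pos hx hu
    refine ((hasDerivAt_id' u).mul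
      ((hasDerivAt_one_add_mul_sub_one x u).inv hpos.ne')).congr_deriv ?_
    simp only [Pi.inv_apply]
    field_simp
    ring
  rw [integral_eq_sub_of_hasDerivAt hderiv
    ((continuousOn_inv_one_add_mul_sub_one hx).pow 2 |>.intervalIntegrable_of_Icc zero_le_one)]
  simp

end ScalarIntegrals

section
open Set MeasureTheory intervalIntegral Function

theorem integral_integral_eq_sub_of_hasDerivAt {F F' : ℝ → ℝ → ℝ} {a b c d : ℝ}
    (hab : a ≤ b) (hcd : c ≤ d)
    (hF : ∀ t ∈ Icc a b, ∀ u ∈ Icc c d, HasDerivAt (F · u) (F' t u) t)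
    (hF' : ContinuousOn (uncurry F') (Icc a b ×ˢ Icc c d))
    (hFa : IntervalIntegrable (F a) volume c d) (hFb : IntervalIntegrable (F b) volume c d) :
    ∫ t in a..b, ∫ u in c..d, F' t u = (∫ u in c..d, F b u) - ∫ u in c..d, F a u := by
  have hswap : ∫ t in a..b, ∫ u in c..d, F' t u = ∫ u in c..d, ∫ t in a..b, F' t u := by
    simp only [integral_of_le hab, integral_of_le hcd]
    refine integral_integral_swap ?_
    rw [Measure.prod_restrict, ← Measure.volume_eq_prod]
    exact (hF'.integrableOn_compact (isCompact_Icc.prod isCompact_Icc)).mono_set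
      (prod_mono Ioc_subset_Icc_self Ioc_subset_Icc_self)
  have hFTC : ∀ u ∈ uIcc c d, ∫ t in a..b, F' t u = F b u - F a u := by
    intro u hu
    rw [uIcc_of_le hcd] at hu
    refine integral_eq_sub_of_hasDerivAt (fun t ht => hF t (uIcc_of_le hab ▸ ht) u hu) ?_
    exact ContinuousOn.intervalIntegrable_of_Icc hab <|
      hF'.comp (continuous_id.prodMk continuous_const).continuousOn fun t ht => ⟨ht, hu⟩
  rw [hswap, integral_congr hFTC, integral_sub hFb hFa]

end

namespace Matrix
-- The C⋆-norm makes `cfc` continuous and `Ring.inverse` differentiable; it induces the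
-- entrywise topology, so continuity statements match the unscoped ones.
open scoped Matrix.Norms.L2Operator MatrixOrder Ring
open Set MeasureTheory intervalIntegral

variable {n : Type*} [Fintype n] [DecidableEq n] {A : Matrix n n ℂ}

lemma hasDerivAt_of_hasDerivAt_apply {M : ℝ → Matrix n n ℂ} {M' : Matrix n n ℂ} {t : ℝ}
    (h : ∀ i j, HasDerivAt (fun s => M s i j) (M' i j) t) : HasDerivAt M M' t :=
  ((ofLinearEquiv ℝ : (n → n → ℂ) ≃ₗ[ℝ] Matrix n n ℂ).toContinuousLinearEquiv.hasFDerivAt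
    ).comp_hasDerivAt t (hasDerivAt_pi.2 fun i => hasDerivAt_pi.2 (h i))

omit [DecidableEq n] in
lemma trace_eq_zero_of_hasDerivAt_apply {M : ℝ → Matrix n n ℂ} {M' : Matrix n n ℂ} {t : ℝ}
    {c : ℂ} (hM : ∀ i j, HasDerivAt (fun s => M s i j) (M' i j) t)
    (htr : ∀ s, trace (M s) = c) : trace M' = 0 := by
  have h : HasDerivAt (fun s => trace (M s)) (trace M') t := HasDerivAt.fun_sum fun i _ => hM i i
  simp only [htr] at h
  exact h.unique (hasDerivAt_const t c)

lemma _root_.HasDerivAt.re_trace {M : ℝ → Matrix n n ℂ} {M' : Matrix n n ℂ} {t : ℝ}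
    (h : HasDerivAt M M' t) : HasDerivAt (fun s => (trace (M s)).re) (trace M').re t :=
  (Complex.reCLM.comp ((traceLinearMap n ℂ ℂ).restrictScalars ℝ).toContinuousLinearMap
    ).hasFDerivAt.comp_hasDerivAt t h

omit [DecidableEq n] in
lemma _root_.ContinuousOn.re_trace {X : Type*} [TopologicalSpace X] {M : X → Matrix n n ℂ}
    {s : Set X} (h : ContinuousOn M s) : ContinuousOn (fun x => (trace (M x)).re) s :=
  (Complex.continuous_re.comp continuous_id.matrix_trace).comp_continuousOn h

lemma IsHermitian.mlog_eq_cfc (hA : A.IsHermitian) : mlog A = cfc Real.log A := by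
  rw [hA.cfc_eq, mlog, dif_pos hA, IsHermitian.cfc, Unitary.conjStarAlgAut_apply]
  rfl

lemma IsHermitian.trace_mul_cfc (hA : A.IsHermitian) (X : Matrix n n ℂ) (f : ℝ → ℝ) :
    trace (X * cfc f A) = ∑ i, (star (hA.eigenvectorUnitary : Matrix n n ℂ) * X *
      hA.eigenvectorUnitary) i i * f (hA.eigenvalues i) := by
  rw [hA.cfc_eq, IsHermitian.cfc, Unitary.conjStarAlgAut_apply, ← mul_assoc, ← mul_assoc,
    trace_mul_cycle, ← mul_assoc, trace]
  simp only [diag, mul_diagonal, Function.comp_apply]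
  rfl

lemma IsHermitian.integral_re_trace_mul_cfc (hA : A.IsHermitian) (X : Matrix n n ℂ)
    {f : ℝ → ℝ → ℝ} {a b : ℝ}
    (hf : ∀ x ∈ spectrum ℝ A, IntervalIntegrable (f · x) volume a b) :
    ∫ u in a..b, (trace (X * cfc (f u) A)).re =
      (trace (X * cfc (fun x => ∫ u in a..b, f u x) A)).re := by
  simp only [hA.trace_mul_cfc, Complex.re_sum, Complex.re_mul_ofReal]
  rw [integral_finsetSum fun i _ => (hf _ (hA.eigenvalues_mem_spectrum_real i)).const_mul _]
  simp only [intervalIntegral.integral_const_mul]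

lemma continuous_vnEnt {X : Type*} [TopologicalSpace X] {ρ : X → Matrix n n ℂ}
    (hρ : Continuous ρ) (hherm : ∀ x, (ρ x).IsHermitian) : Continuous fun x => vnEnt (ρ x) := by
  have hcfc : (fun x => vnEnt (ρ x)) =
      fun x => -(trace (cfc (fun y => y * Real.log y) (ρ x))).re := by
    funext x
    have hx := hherm x
    rw [vnEnt, hx.mlog_eq_cfc, cfc_mul (fun y => y) Real.log (ρ x)
      (hg := (ρ x).finite_real_spectrum.continuousOn _), cfc_id' ℝ (ρ x)]
  rw [hcfc]
  exact (Complex.continuous_re.comp (Continuous.cfc_of_mem_nhdsSet (s := univ) _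
    Filter.univ_mem hρ (fun x => hherm x) Real.continuous_mul_log.continuousOn).matrix_trace).neg

lemma IsHermitian.one_add_smul_sub_one_eq_cfc (hA : A.IsHermitian) (u : ℝ) :
    1 + u • (A - 1) = cfc (fun x => 1 + u * (x - 1)) A := by
  simp (disch := exact A.finite_real_spectrum.continuousOn _) only [cfc_add, cfc_const_mul,
    cfc_sub, cfc_id' ℝ A, cfc_const_one ℝ A]

lemma PosDef.isUnit_one_add_smul_sub_one (hA : A.PosDef) {u : ℝ} (hu : u ∈ Icc (0 : ℝ) 1) :
    IsUnit (1 + u • (A - 1)) := by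
  rw [hA.1.one_add_smul_sub_one_eq_cfc]
  exact isUnit_cfc _ _ (A.finite_real_spectrum.continuousOn _) hA.1.isSelfAdjoint
    fun x hx => (one_add_mul_sub_one_pos (hA.isStrictlyPositive.spectrum_pos hx) hu).ne'

lemma PosDef.ringInverse_one_add_smul_sub_one_eq_cfc (hA : A.PosDef) {u : ℝ}
    (hu : u ∈ Icc (0 : ℝ) 1) :
    (1 + u • (A - 1))⁻¹ʳ = cfc (fun x => (1 + u * (x - 1))⁻¹) A := by
  rw [hA.1.one_add_smul_sub_one_eq_cfc, cfc_inv _ _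
    (fun x hx => (one_add_mul_sub_one_pos (hA.isStrictlyPositive.spectrum_pos hx) hu).ne')
    (A.finite_real_spectrum.continuousOn _) hA.1.isSelfAdjoint]

lemma continuousAt_ringInverse_one_add_smul_sub_one {p : Matrix n n ℂ × ℝ}
    (hp : IsUnit (1 + p.2 • (p.1 - 1))) :
    ContinuousAt (fun p : Matrix n n ℂ × ℝ => (1 + p.2 • (p.1 - 1))⁻¹ʳ) p := by
  have h := NormedRing.inverse_continuousAt hp.unit
  rw [hp.unit_spec] at h
  exact h.comp (f := fun p : Matrix n n ℂ × ℝ => 1 + p.2 • (p.1 - 1)) (by fun_prop)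

lemma PosDef.continuousOn_ringInverse_one_add_smul_sub_one (hA : A.PosDef) :
    ContinuousOn (fun u : ℝ => (1 + u • (A - 1))⁻¹ʳ) (Icc 0 1) := fun u hu =>
  ((continuousAt_ringInverse_one_add_smul_sub_one (p := (A, u))
    (hA.isUnit_one_add_smul_sub_one hu)).comp
      (continuous_const.prodMk continuous_id).continuousAt).continuousWithinAt

lemma PosDef.integral_re_trace_mul_ringInverse_mul_mul (hA : A.PosDef) (X : Matrix n n ℂ) :
    ∫ u in (0 : ℝ)..1,
      (trace (A * ((1 + u • (A - 1))⁻¹ʳ * X * (1 + u • (A - 1))⁻¹ʳ))).re = (trace X).re := by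
  have hcfc : EqOn
      (fun u : ℝ => (trace (A * ((1 + u • (A - 1))⁻¹ʳ * X * (1 + u • (A - 1))⁻¹ʳ))).re)
      (fun u => (trace (X * cfc (fun x => (1 + u * (x - 1))⁻¹ * x * (1 + u * (x - 1))⁻¹) A)).re)
      (uIcc 0 1) := fun u hu => by
    rw [uIcc_of_le zero_le_one] at hu
    have hsa : IsSelfAdjoint A := hA.1 -- found by `cfc_tac`
    dsimp only
    rw [← mul_assoc, ← mul_assoc, trace_mul_cycle, trace_mul_comm,
      hA.ringInverse_one_add_smul_sub_one_eq_cfc hu]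
    simp (disch := exact A.finite_real_spectrum.continuousOn _) only [cfc_mul, cfc_id' ℝ A,
      mul_assoc]
  have hint : ∀ x ∈ spectrum ℝ A,
      ∫ u in (0 : ℝ)..1, (1 + u * (x - 1))⁻¹ * x * (1 + u * (x - 1))⁻¹ = 1 := fun x hx => by
    have hx := hA.isStrictlyPositive.spectrum_pos hx
    simp_rw [show ∀ u : ℝ, (1 + u * (x - 1))⁻¹ * x * (1 + u * (x - 1))⁻¹ =
      x * ((1 + u * (x - 1))⁻¹) ^ 2 from fun u => by ring]
    rw [intervalIntegral.integral_const_mul, integral_inv_one_add_mul_sub_one_sq hx,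
      mul_inv_cancel₀ hx.ne']
  rw [integral_congr hcfc, hA.1.integral_re_trace_mul_cfc X
      (f := fun u x => (1 + u * (x - 1))⁻¹ * x * (1 + u * (x - 1))⁻¹) fun x hx =>
      have hg := continuousOn_inv_one_add_mul_sub_one (hA.isStrictlyPositive.spectrum_pos hx)
      ((hg.mul continuousOn_const).mul hg).intervalIntegrable_of_Icc zero_le_one,
    cfc_congr hint, cfc_const_one ℝ A hA.1.isSelfAdjoint, mul_one]

/-- For positive definite `A`, `∫₀¹ logIntegrand A u du = log A`. -/
noncomputable def logIntegrand (A : Matrix n n ℂ) (u : ℝ) : Matrix n n ℂ :=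
  (A - 1) * (1 + u • (A - 1))⁻¹ʳ

lemma PosDef.logIntegrand_eq_cfc (hA : A.PosDef) {u : ℝ} (hu : u ∈ Icc (0 : ℝ) 1) :
    logIntegrand A u = cfc (fun x => (x - 1) * (1 + u * (x - 1))⁻¹) A := by
  rw [logIntegrand, hA.ringInverse_one_add_smul_sub_one_eq_cfc hu]
  have hsa : IsSelfAdjoint A := hA.1 -- found by `cfc_tac`
  simp (disch := exact A.finite_real_spectrum.continuousOn _) only [cfc_mul, cfc_sub,
    cfc_id' ℝ A, cfc_const_one ℝ A]

lemma PosDef.continuousOn_logIntegrand (hA : A.PosDef) :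
    ContinuousOn (logIntegrand A) (Icc 0 1) :=
  continuousOn_const.mul hA.continuousOn_ringInverse_one_add_smul_sub_one

lemma PosDef.integral_re_trace_mul_logIntegrand (hA : A.PosDef) (X : Matrix n n ℂ) :
    ∫ u in (0 : ℝ)..1, (trace (X * logIntegrand A u)).re = (trace (X * mlog A)).re := by
  have hcfc : EqOn (fun u => (trace (X * logIntegrand A u)).re)
      (fun u => (trace (X * cfc (fun x => (x - 1) * (1 + u * (x - 1))⁻¹) A)).re) (uIcc 0 1) :=
    fun u hu => by
      rw [uIcc_of_le zero_le_one] at hu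
      dsimp only
      rw [hA.logIntegrand_eq_cfc hu]
  rw [integral_congr hcfc, hA.1.integral_re_trace_mul_cfc X
      (f := fun u x => (x - 1) * (1 + u * (x - 1))⁻¹) fun x hx =>
      (continuousOn_const.mul (continuousOn_inv_one_add_mul_sub_one
        (hA.isStrictlyPositive.spectrum_pos hx))).intervalIntegrable_of_Icc zero_le_one,
    hA.1.mlog_eq_cfc, cfc_congr fun x hx =>
      integral_sub_one_mul_inv_one_add_mul_sub_one (hA.isStrictlyPositive.spectrum_pos hx)]

lemma hasDerivAt_logIntegrand {ρ : ℝ → Matrix n n ℂ} {ρ' : Matrix n n ℂ} {t u : ℝ}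
    (hρ : HasDerivAt ρ ρ' t) (hunit : IsUnit (1 + u • (ρ t - 1))) :
    HasDerivAt (fun s => logIntegrand (ρ s) u)
      ((1 + u • (ρ t - 1))⁻¹ʳ * ρ' * (1 + u • (ρ t - 1))⁻¹ʳ) t := by
  set R := (1 + u • (ρ t - 1))⁻¹ʳ
  have hB : HasDerivAt (fun s => 1 + u • (ρ s - 1)) (u • ρ') t :=
    ((hρ.sub_const 1).const_smul u).const_add 1
  have hinv : HasDerivAt (fun s => (1 + u • (ρ s - 1))⁻¹ʳ) (-(R * (u • ρ') * R)) t := by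
    have hunit_inv : ((hunit.unit⁻¹ : (Matrix n n ℂ)ˣ) : Matrix n n ℂ) = R := by
      rw [← Ring.inverse_unit, hunit.unit_spec]
    have hfd := hasFDerivAt_ringInverse (𝕜 := ℝ) hunit.unit
    rw [hunit_inv, hunit.unit_spec] at hfd
    exact hfd.comp_hasDerivAt t hB
  have hR : R + u • ((ρ t - 1) * R) = 1 := by
    simpa [R, add_mul, smul_mul_assoc] using Ring.mul_inverse_cancel _ hunit
  refine ((hρ.sub_const 1).fun_mul hinv).congr_deriv ?_
  calc ρ' * R + (ρ t - 1) * -(R * (u • ρ') * R)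
      = ρ' * R - (u • ((ρ t - 1) * R)) * ρ' * R := by
        simp only [mul_neg, smul_mul_assoc, mul_smul_comm, mul_assoc, sub_eq_add_neg]
    _ = R * ρ' * R := by rw [eq_sub_of_add_eq' hR]; noncomm_ring

noncomputable def entropyKernel (A : Matrix n n ℂ) (u : ℝ) : ℝ :=
  (trace (A * logIntegrand A u)).re

noncomputable def entropyKernelDeriv (A X : Matrix n n ℂ) (u : ℝ) : ℝ :=
  (trace (X * logIntegrand A u)).re +
    (trace (A * ((1 + u • (A - 1))⁻¹ʳ * X * (1 + u • (A - 1))⁻¹ʳ))).re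

lemma PosDef.integral_entropyKernel (hA : A.PosDef) :
    ∫ u in (0 : ℝ)..1, entropyKernel A u = (trace (A * mlog A)).re :=
  hA.integral_re_trace_mul_logIntegrand A

lemma PosDef.integral_entropyKernelDeriv (hA : A.PosDef) (X : Matrix n n ℂ) :
    ∫ u in (0 : ℝ)..1, entropyKernelDeriv A X u = (trace (X * mlog A)).re + (trace X).re := by
  have hR := hA.continuousOn_ringInverse_one_add_smul_sub_one
  have h₁ : IntervalIntegrable (fun u => (trace (X * logIntegrand A u)).re) volume 0 1 :=
    (continuousOn_const.mul hA.continuousOn_logIntegrand).re_trace.intervalIntegrable_of_Icc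
      zero_le_one
  have h₂ : IntervalIntegrable
      (fun u : ℝ => (trace (A * ((1 + u • (A - 1))⁻¹ʳ * X * (1 + u • (A - 1))⁻¹ʳ))).re)
      volume 0 1 :=
    (continuousOn_const.mul ((hR.mul continuousOn_const).mul hR)).re_trace.intervalIntegrable_of_Icc
      zero_le_one
  unfold entropyKernelDeriv
  rw [integral_add h₁ h₂, hA.integral_re_trace_mul_logIntegrand,
    hA.integral_re_trace_mul_ringInverse_mul_mul]

lemma PosDef.continuousOn_entropyKernel (hA : A.PosDef) :
    ContinuousOn (entropyKernel A) (Icc 0 1) :=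
  (continuousOn_const.mul hA.continuousOn_logIntegrand).re_trace

lemma hasDerivAt_entropyKernel {ρ : ℝ → Matrix n n ℂ} {ρ' : Matrix n n ℂ} {t u : ℝ}
    (hρ : HasDerivAt ρ ρ' t) (hunit : IsUnit (1 + u • (ρ t - 1))) :
    HasDerivAt (fun s => entropyKernel (ρ s) u) (entropyKernelDeriv (ρ t) ρ' u) t := by
  simpa only [entropyKernel, entropyKernelDeriv, trace_add, Complex.add_re] using
    (hρ.fun_mul (hasDerivAt_logIntegrand hρ hunit)).re_trace

lemma continuousAt_entropyKernelDeriv {p : Matrix n n ℂ × Matrix n n ℂ × ℝ}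
    (hp : IsUnit (1 + p.2.2 • (p.1 - 1))) :
    ContinuousAt (fun p : Matrix n n ℂ × Matrix n n ℂ × ℝ =>
      entropyKernelDeriv p.1 p.2.1 p.2.2) p := by
  have hR : ContinuousAt
      (fun p : Matrix n n ℂ × Matrix n n ℂ × ℝ => (1 + p.2.2 • (p.1 - 1))⁻¹ʳ) p :=
    (continuousAt_ringInverse_one_add_smul_sub_one hp).comp
      (f := fun p : Matrix n n ℂ × Matrix n n ℂ × ℝ => (p.1, p.2.2)) (by fun_prop)
  unfold entropyKernelDeriv logIntegrand
  fun_prop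

theorem integral_re_trace_deriv_mul_mlog {ρ ρ' : ℝ → Matrix n n ℂ} {a b : ℝ} (hab : a ≤ b)
    (hρ : ∀ t ∈ Icc a b, ∀ i j, HasDerivAt (fun s => ρ s i j) (ρ' t i j) t)
    (hρ' : ContinuousOn ρ' (Icc a b)) (hpos : ∀ t ∈ Icc a b, (ρ t).PosDef) :
    ∫ t in a..b, ((trace (ρ' t * mlog (ρ t))).re + (trace (ρ' t)).re) =
      vnEnt (ρ a) - vnEnt (ρ b) := by
  have hderiv t (ht : t ∈ Icc a b) : HasDerivAt ρ (ρ' t) t :=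
    hasDerivAt_of_hasDerivAt_apply (hρ t ht)
  have hunit t (ht : t ∈ Icc a b) u (hu : u ∈ Icc (0 : ℝ) 1) : IsUnit (1 + u • (ρ t - 1)) :=
    (hpos t ht).isUnit_one_add_smul_sub_one hu
  have hρc : ContinuousOn ρ (Icc a b) := fun t ht => (hderiv t ht).continuousAt.continuousWithinAt
  have hF' : ContinuousOn (Function.uncurry fun t u => entropyKernelDeriv (ρ t) (ρ' t) u)
      (Icc a b ×ˢ Icc 0 1) := fun q hq =>
    ContinuousAt.comp_continuousWithinAt (f := fun q : ℝ × ℝ => (ρ q.1, ρ' q.1, q.2))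
      (continuousAt_entropyKernelDeriv (hunit _ hq.1 _ hq.2))
      (((hρc.comp continuousOn_fst fun _ hq => hq.1).prodMk
        ((hρ'.comp continuousOn_fst fun _ hq => hq.1).prodMk continuousOn_snd)) q hq)
  have hFint t (ht : t ∈ Icc a b) : IntervalIntegrable (entropyKernel (ρ t)) volume 0 1 :=
    (hpos t ht).continuousOn_entropyKernel.intervalIntegrable_of_Icc zero_le_one
  calc ∫ t in a..b, ((trace (ρ' t * mlog (ρ t))).re + (trace (ρ' t)).re)
      = ∫ t in a..b, ∫ u in (0 : ℝ)..1, entropyKernelDeriv (ρ t) (ρ' t) u :=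
        integral_congr fun t ht =>
          ((hpos t (uIcc_of_le hab ▸ ht)).integral_entropyKernelDeriv (ρ' t)).symm
    _ = (∫ u in (0 : ℝ)..1, entropyKernel (ρ b) u) - ∫ u in (0 : ℝ)..1, entropyKernel (ρ a) u :=
        integral_integral_eq_sub_of_hasDerivAt hab zero_le_one
          (fun t ht u hu => hasDerivAt_entropyKernel (hderiv t ht) (hunit t ht u hu)) hF'
          (hFint a ⟨le_rfl, hab⟩) (hFint b ⟨hab, le_rfl⟩)
    _ = vnEnt (ρ a) - vnEnt (ρ b) := by
        rw [(hpos a ⟨le_rfl, hab⟩).integral_entropyKernel,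
          (hpos b ⟨hab, le_rfl⟩).integral_entropyKernel, vnEnt, vnEnt]
        ring

end Matrix

/-- **Integral form of the quasi-static energy cost.**
For a continuously differentiable path of density matrices `t ↦ ρ(t)`,
faithful on `(0,1]`, the (possibly improper) integral
`∫₀¹ tr(ρ'(t) log ρ(t)) dt` converges and equals `S(ρ(0)) - S(ρ(1))`. -/
theorem quasistatic_integral {d : ℕ}
    (ρ ρ' : ℝ → Matrix (Fin d) (Fin d) ℂ)
    (hderiv : ∀ t : ℝ, ∀ i j, HasDerivAt (fun s => ρ s i j) (ρ' t i j) t)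
    (hcont : Continuous ρ')
    (hdm : ∀ t : ℝ, IsDensityMatrix (ρ t))
    (hfaithful : ∀ t ∈ Set.Ioc (0 : ℝ) 1, (ρ t).PosDef) :
    Filter.Tendsto
      (fun ε : ℝ => ∫ t in ε..1, (Matrix.trace (ρ' t * mlog (ρ t))).re)
      (nhdsWithin 0 (Set.Ioi 0)) (nhds (vnEnt (ρ 0) - vnEnt (ρ 1))) := by
  have hρ : Continuous ρ := continuous_matrix fun i j =>
    continuous_iff_continuousAt.2 fun t => (hderiv t i j).continuousAt
  have htr t : trace (ρ' t) = 0 :=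
    trace_eq_zero_of_hasDerivAt_apply (hderiv t) fun s => (hdm s).2
  have hS := (continuous_vnEnt hρ fun t => (hdm t).1.1).tendsto 0
  refine ((hS.mono_left nhdsWithin_le_nhds).sub_const _).congr' ?_
  filter_upwards [Ioc_mem_nhdsGT zero_lt_one] with ε ⟨hε₀, hε₁⟩
  have := integral_re_trace_deriv_mul_mlog hε₁ (fun t _ => hderiv t) hcont.continuousOn
    fun t ht => hfaithful t ⟨hε₀.trans_le ht.1, ht.2⟩
  simpa [htr] using this.symm
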